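/- For a distribution (or smooth function) u on ℝ and the map Φ(x,y) = (x|y) on Ξ × Ξ where Ξ is the minimal cone: 𝓑_x u((x|y)) = y · u((x|y)) for all y ∈ Ξ if and only if u solves the ODE t u'' + λ u' − u = 0. (Smooth function version: assume u ∈ C²(ℝ).) -/

import Mathlib

open scoped RealInnerProductSpace

/-- The quadratic representation `P(x) = 2 L(x)² − L(x²)` of a Jordan product `mul`. -/
noncomputable def quadRep (n : ℕ)
    (mul : EuclideanSpace ℝ (Fin n) →ₗ[ℝ] EuclideanSpace ℝ (Fin n) →ₗ[ℝ] EuclideanSpace ℝ (Fin n))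
    (x : EuclideanSpace ℝ (Fin n)) :
    EuclideanSpace ℝ (Fin n) →ₗ[ℝ] EuclideanSpace ℝ (Fin n) :=
  2 • ((mul x).comp (mul x)) - mul (mul x x)

/-- The polarized quadratic representation `P(x,y) = ½(P(x+y) − P(x) − P(y))`. -/
noncomputable def quadRepPol (n : ℕ)
    (mul : EuclideanSpace ℝ (Fin n) →ₗ[ℝ] EuclideanSpace ℝ (Fin n) →ₗ[ℝ] EuclideanSpace ℝ (Fin n))
    (a b : EuclideanSpace ℝ (Fin n)) :
    EuclideanSpace ℝ (Fin n) →ₗ[ℝ] EuclideanSpace ℝ (Fin n) :=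
  (1 / 2 : ℝ) • (quadRep n mul (a + b) - quadRep n mul a - quadRep n mul b)

/-- The Bessel operator `𝓑_λ u = ∑_{α,β} ∂²u/∂x_α∂x_β P(e_α,e_β)x + λ ∑_α ∂u/∂x_α e_α`,
computed in the standard orthonormal basis of Euclidean space. -/
noncomputable def besselOp (n : ℕ)
    (mul : EuclideanSpace ℝ (Fin n) →ₗ[ℝ] EuclideanSpace ℝ (Fin n) →ₗ[ℝ] EuclideanSpace ℝ (Fin n))
    (l : ℝ) (f : EuclideanSpace ℝ (Fin n) → ℝ) (x : EuclideanSpace ℝ (Fin n)) :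
    EuclideanSpace ℝ (Fin n) :=
  (∑ α : Fin n, ∑ β : Fin n,
      iteratedFDeriv ℝ 2 f x
          ![EuclideanSpace.basisFun (Fin n) ℝ α, EuclideanSpace.basisFun (Fin n) ℝ β] •
        quadRepPol n mul (EuclideanSpace.basisFun (Fin n) ℝ α)
          (EuclideanSpace.basisFun (Fin n) ℝ β) x)
    + l • (∑ α : Fin n,
        fderiv ℝ f x (EuclideanSpace.basisFun (Fin n) ℝ α) • EuclideanSpace.basisFun (Fin n) ℝ α)

/-! By the chain rule, `u((·|y))` has gradient `u'((x|y)) y` and Hessian `u''((x|y)) y ⊗ y`, so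
bilinearity of `P(·,·)` collapses the second-order part of `𝓑` to `u''((x|y)) P(y)x`. For `y ∈ Ξ`
this is `(x|y) u''((x|y)) y`, hence `𝓑_x u((x|y)) = ((x|y) u'' + λ u')((x|y)) y`; as `(x|y)` runs
over all of `ℝ` when `y ≠ 0`, comparing coefficients of `y` gives the ODE. -/

section InnerComposition

variable {F : Type*} [NormedAddCommGroup F] [InnerProductSpace ℝ F]

theorem hasFDerivAt_comp_inner_const {u : ℝ → ℝ} {y x : F}
    (hu : DifferentiableAt ℝ u ⟪x, y⟫) :
    HasFDerivAt (fun v : F => u ⟪v, y⟫) (deriv u ⟪x, y⟫ • innerSL ℝ y) x := by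
  have hinner : HasFDerivAt (fun v : F => ⟪v, y⟫) (innerSL ℝ y) x :=
    (innerSL ℝ y).hasFDerivAt.congr_of_eventuallyEq (.of_forall fun v => real_inner_comm y v)
  exact hu.hasDerivAt.comp_hasFDerivAt x hinner

theorem iteratedFDeriv_two_comp_inner_const_apply {u : ℝ → ℝ} (hu : ContDiff ℝ 2 u)
    (y x a b : F) :
    iteratedFDeriv ℝ 2 (fun v : F => u ⟪v, y⟫) x ![a, b]
      = deriv (deriv u) ⟪x, y⟫ * ⟪y, a⟫ * ⟪y, b⟫ := by
  have hu' : ContDiff ℝ 1 (deriv u) := hu.iterate_deriv' 1 1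
  have hfderiv : fderiv ℝ (fun v : F => u ⟪v, y⟫) = fun v => deriv u ⟪v, y⟫ • innerSL ℝ y :=
    funext fun v => (hasFDerivAt_comp_inner_const (hu.differentiable two_ne_zero _)).fderiv
  have hsecond := (hasFDerivAt_comp_inner_const (u := deriv u) (y := y) (x := x)
    (hu'.differentiable one_ne_zero _)).smul_const (innerSL ℝ y)
  rw [iteratedFDeriv_two_apply, hfderiv, hsecond.fderiv]
  simp [mul_assoc]

theorem exists_inner_left_eq {y : F} (hy : y ≠ 0) (t : ℝ) : ∃ x : F, ⟪x, y⟫ = t :=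
  ⟨(t / ⟪y, y⟫) • y, by rw [real_inner_smul_left, div_mul_cancel₀ _ (inner_self_ne_zero.mpr hy)]⟩

end InnerComposition

section EuclideanBasis

variable {ι : Type*} [Fintype ι]

theorem EuclideanSpace.sum_smul_basisFun (y : EuclideanSpace ℝ ι) :
    ∑ i, y i • EuclideanSpace.basisFun ι ℝ i = y :=
  (EuclideanSpace.basisFun ι ℝ).sum_repr y

theorem EuclideanSpace.inner_basisFun_right (y : EuclideanSpace ℝ ι) (i : ι) :
    ⟪y, EuclideanSpace.basisFun ι ℝ i⟫ = y i := by
  classical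
  simp [EuclideanSpace.basisFun_apply, EuclideanSpace.inner_single_right]

theorem LinearMap.sum_sum_smul_basisFun {M : Type*} [AddCommGroup M] [Module ℝ M]
    (B : EuclideanSpace ℝ ι →ₗ[ℝ] EuclideanSpace ℝ ι →ₗ[ℝ] M) (y : EuclideanSpace ℝ ι) :
    ∑ i, ∑ j, (y i * y j) • B (EuclideanSpace.basisFun ι ℝ i) (EuclideanSpace.basisFun ι ℝ j)
      = B y y := by
  conv_rhs => rw [← EuclideanSpace.sum_smul_basisFun y]
  simp only [map_sum, map_smul, LinearMap.sum_apply, LinearMap.smul_apply, Finset.smul_sum,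
    smul_smul]
  rw [Finset.sum_comm]
  simp only [mul_comm]

end EuclideanBasis

section QuadraticRepresentation

variable {n : ℕ}
  {mul : EuclideanSpace ℝ (Fin n) →ₗ[ℝ] EuclideanSpace ℝ (Fin n) →ₗ[ℝ] EuclideanSpace ℝ (Fin n)}

theorem quadRepPol_apply (hcomm : ∀ a b, mul a b = mul b a) (a b x : EuclideanSpace ℝ (Fin n)) :
    quadRepPol n mul a b x = mul a (mul b x) + mul b (mul a x) - mul (mul a b) x := by
  simp only [quadRepPol, quadRep, LinearMap.smul_apply, LinearMap.sub_apply,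
    LinearMap.comp_apply, map_add, LinearMap.add_apply, hcomm b a]
  module

theorem sum_sum_smul_quadRepPol_basisFun (hcomm : ∀ a b, mul a b = mul b a)
    (y x : EuclideanSpace ℝ (Fin n)) :
    ∑ α, ∑ β, (y α * y β) • quadRepPol n mul (EuclideanSpace.basisFun (Fin n) ℝ α)
        (EuclideanSpace.basisFun (Fin n) ℝ β) x
      = quadRep n mul y x := by
  let B := mul.compl₂ (mul.flip x) + (mul.compl₂ (mul.flip x)).flip - mul.compr₂ (mul.flip x)
  have hB : ∀ a b, quadRepPol n mul a b x = B a b := fun a b => by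
    simp [B, quadRepPol_apply hcomm]
  simp only [hB, B.sum_sum_smul_basisFun]
  simp [B, quadRep, two_smul]

end QuadraticRepresentation

section BesselOperator

variable {n : ℕ}
  {mul : EuclideanSpace ℝ (Fin n) →ₗ[ℝ] EuclideanSpace ℝ (Fin n) →ₗ[ℝ] EuclideanSpace ℝ (Fin n)}
  {u : ℝ → ℝ}

theorem besselOp_comp_inner_const (hcomm : ∀ a b, mul a b = mul b a) (l : ℝ)
    (hu : ContDiff ℝ 2 u) (y x : EuclideanSpace ℝ (Fin n)) :
    besselOp n mul l (fun v => u ⟪v, y⟫) x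
      = deriv (deriv u) ⟪x, y⟫ • quadRep n mul y x + (l * deriv u ⟪x, y⟫) • y := by
  have hfderiv := hasFDerivAt_comp_inner_const (hu.differentiable two_ne_zero ⟪x, y⟫)
  simp only [besselOp, iteratedFDeriv_two_comp_inner_const_apply hu, hfderiv.fderiv,
    _root_.smul_apply, innerSL_apply_apply, EuclideanSpace.inner_basisFun_right, smul_eq_mul]
  rw [← sum_sum_smul_quadRepPol_basisFun hcomm y x]
  congr 1
  · simp only [Finset.smul_sum, smul_smul, mul_assoc]
  · simp only [mul_smul, ← Finset.smul_sum, EuclideanSpace.sum_smul_basisFun]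

theorem besselOp_comp_inner_const_of_quadRep_eq (hcomm : ∀ a b, mul a b = mul b a) (l : ℝ)
    (hu : ContDiff ℝ 2 u) {y : EuclideanSpace ℝ (Fin n)} (hy : ∀ x, quadRep n mul y x = ⟪x, y⟫ • y)
    (x : EuclideanSpace ℝ (Fin n)) :
    besselOp n mul l (fun v => u ⟪v, y⟫) x
      = (⟪x, y⟫ * deriv (deriv u) ⟪x, y⟫ + l * deriv u ⟪x, y⟫) • y := by
  rw [besselOp_comp_inner_const hcomm l hu, hy, smul_smul, ← add_smul, mul_comm]

end BesselOperator

theorem stmt_13_general (n : ℕ)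
    (mul : EuclideanSpace ℝ (Fin n) →ₗ[ℝ] EuclideanSpace ℝ (Fin n) →ₗ[ℝ] EuclideanSpace ℝ (Fin n))
    (hcomm : ∀ a b, mul a b = mul b a)
    (l : ℝ) (Ξ : Set (EuclideanSpace ℝ (Fin n)))
    (hΞ : ∀ y ∈ Ξ, ∀ x : EuclideanSpace ℝ (Fin n), quadRep n mul y x = ⟪x, y⟫ • y)
    (hne : ∃ y ∈ Ξ, y ≠ 0)
    (u : ℝ → ℝ) (hu : ContDiff ℝ 2 u) :
    (∀ y ∈ Ξ, ∀ x : EuclideanSpace ℝ (Fin n),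
        besselOp n mul l (fun v => u ⟪v, y⟫) x = u ⟪x, y⟫ • y)
      ↔ (∀ t : ℝ, t * deriv (deriv u) t + l * deriv u t - u t = 0) := by
  have hbessel := fun y (hy : y ∈ Ξ) =>
    besselOp_comp_inner_const_of_quadRep_eq hcomm l hu (hΞ y hy)
  constructor
  · intro h t
    obtain ⟨y, hy, hy0⟩ := hne
    obtain ⟨x, rfl⟩ := exists_inner_left_eq hy0 t
    have hcoeff := smul_left_injective ℝ hy0 ((hbessel y hy x).symm.trans (h y hy x))
    linarith
  · intro h y hy x
    rw [hbessel y hy x]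
    congr 1
    linarith [h ⟪x, y⟫]

/-- Characterization of the Bessel-equation: for `u ∈ C²(ℝ)` and a set `Ξ` (the minimal cone)
whose elements satisfy `P(y)x = (x|y)y`, one has
`𝓑_x u((x|y)) = u((x|y))·y` for all `y ∈ Ξ` and all `x`
if and only if `u` solves `t u'' + λ u' − u = 0`. -/
theorem stmt_13 (n : ℕ)
    (mul : EuclideanSpace ℝ (Fin n) →ₗ[ℝ] EuclideanSpace ℝ (Fin n) →ₗ[ℝ] EuclideanSpace ℝ (Fin n))
    (hcomm : ∀ a b, mul a b = mul b a)
    (hjordan : ∀ a b, mul (mul a b) (mul a a) = mul a (mul b (mul a a)))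
    (hassoc : ∀ a b c, ⟪mul a b, c⟫ = ⟪b, mul a c⟫)
    (l : ℝ) (Ξ : Set (EuclideanSpace ℝ (Fin n)))
    (hΞ : ∀ y ∈ Ξ, ∀ x : EuclideanSpace ℝ (Fin n), quadRep n mul y x = ⟪x, y⟫ • y)
    (hne : ∃ y ∈ Ξ, y ≠ 0)
    (u : ℝ → ℝ) (hu : ContDiff ℝ 2 u) :
    (∀ y ∈ Ξ, ∀ x : EuclideanSpace ℝ (Fin n),
        besselOp n mul l (fun v => u ⟪v, y⟫) x = u ⟪x, y⟫ • y)
      ↔ (∀ t : ℝ, t * deriv (deriv u) t + l * deriv u t - u t = 0) :=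
  stmt_13_general n mul hcomm l Ξ hΞ hne u hu
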